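/- Let n ≥ 1 be an integer. The set of real zeros of the derivative V_n' is finite and has exactly 4n − 1 elements. This set contains 0 and the points ±(k − 1/2) for k = 1, …, n, and for each k = 1, …, n−1 it contains exactly one point in the open interval (k − 1/2, k + 1/2) and exactly one point in (−k − 1/2, −k + 1/2). -/

import Mathlib

open Finset

/-- The φ^{4n} potential `V_n(x) = ∏_{k=1}^n (x² − (k−1/2)²)²`. -/
noncomputable def Vn (n : ℕ) : ℝ → ℝ :=
  fun x => ∏ k ∈ Finset.Icc 1 n, (x ^ 2 - ((k : ℝ) - 1 / 2) ^ 2) ^ 2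

/-!
`V_n ≥ 0` vanishes at the `2n` points `±(k − 1/2)`, so these are critical points; `V_n'` is odd,
so `0` is one too; and Rolle's theorem gives a critical point strictly between any two
consecutive zeros `k − 1/2 < k + 1/2` of `V_n`, on both sides of the origin. These are
`2n + 1 + 2(n − 1) = 4n − 1` distinct critical points, while `V_n'` is a nonzero polynomial of
degree `4n − 1`. Hence they are all of them, which also gives uniqueness in each interval.
-/

open Polynomial

theorem Polynomial.setOf_eval_eq_zero_eq_of_natDegree_le_card {R : Type*} [CommRing R]
    [IsDomain R] [DecidableEq R] {p : R[X]} (hp : p ≠ 0) {S : Finset R}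
    (hS : ∀ x ∈ S, p.eval x = 0) (hcard : p.natDegree ≤ #S) :
    {x | p.eval x = 0} = S := by
  have hsub : S ⊆ p.roots.toFinset := fun x hx => by simpa [hp] using hS x hx
  have hroots : p.roots.toFinset = S := by
    refine (eq_of_subset_of_card_le hsub ?_).symm
    calc #p.roots.toFinset ≤ Multiset.card p.roots := Multiset.toFinset_card_le _
      _ ≤ p.natDegree := card_roots' p
      _ ≤ #S := hcard
  ext x
  simp [← hroots, hp]

theorem Finset.card_insert_zero_union_image_neg {α : Type*} [AddCommGroup α] [LinearOrder α]
    [IsOrderedAddMonoid α] [DecidableEq α] {P : Finset α} (hP : ∀ x ∈ P, 0 < x) :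
    #(insert 0 (P ∪ P.image Neg.neg)) = 2 * #P + 1 := by
  have hdisj : Disjoint P (P.image Neg.neg) := by
    refine disjoint_left.2 fun x hx hx' => ?_
    obtain ⟨y, hy, rfl⟩ := mem_image.1 hx'
    exact (neg_neg_iff_pos.2 (hP y hy)).not_gt (hP _ hx)
  have h0 : (0 : α) ∉ P ∪ P.image Neg.neg := by
    simp only [mem_union, mem_image, neg_eq_zero, exists_eq_right]
    exact fun h => h.elim (fun h => (hP 0 h).false) (fun h => (hP 0 h).false)
  rw [card_insert_of_notMem h0, card_union_of_disjoint hdisj,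
    card_image_of_injective _ neg_injective, two_mul]

theorem existsUnique_mem_Ioo_neg_of_odd {g : ℝ → ℝ} (hg : ∀ x, g (-x) = -g x) {a b : ℝ}
    (h : ∃! x, x ∈ Set.Ioo a b ∧ g x = 0) : ∃! x, x ∈ Set.Ioo (-b) (-a) ∧ g x = 0 := by
  obtain ⟨x, ⟨⟨hax, hxb⟩, hgx⟩, huniq⟩ := h
  refine ⟨-x, ⟨⟨by linarith, by linarith⟩, by rw [hg, hgx, neg_zero]⟩, ?_⟩
  rintro y ⟨⟨hby, hya⟩, hgy⟩
  have := huniq (-y) ⟨⟨by linarith, by linarith⟩, by rw [hg, hgy, neg_zero]⟩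
  linarith

theorem Nat.eq_of_mem_Ioo_sub_half_add_half {j k : ℕ} {x : ℝ}
    (hj : x ∈ Set.Ioo ((j : ℝ) - 1 / 2) (j + 1 / 2))
    (hk : x ∈ Set.Ioo ((k : ℝ) - 1 / 2) (k + 1 / 2)) : j = k := by
  have hjk : (j : ℝ) < k + 1 := by linarith [hj.1, hk.2]
  have hkj : (k : ℝ) < j + 1 := by linarith [hk.1, hj.2]
  norm_cast at hjk hkj
  omega

theorem Nat.cast_sub_half_notMem_Ioo (j k : ℕ) :
    (j : ℝ) - 1 / 2 ∉ Set.Ioo ((k : ℝ) - 1 / 2) (k + 1 / 2) := by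
  rintro ⟨hkj, hjk⟩
  have hkj' : (k : ℝ) < j := by linarith
  have hjk' : (j : ℝ) < k + 1 := by linarith
  norm_cast at hkj' hjk'
  omega

namespace Vn

noncomputable def poly (n : ℕ) : ℝ[X] :=
  ∏ k ∈ Icc 1 n, (X ^ 2 - C (((k : ℝ) - 1 / 2) ^ 2)) ^ 2

variable {n : ℕ}

theorem eq_eval_poly (n : ℕ) : Vn n = fun x => (poly n).eval x := by
  funext x
  simp only [Vn, poly, eval_prod, eval_pow, eval_sub, eval_X, eval_C]

theorem deriv_eq_eval_derivative (n : ℕ) (x : ℝ) :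
    deriv (Vn n) x = (poly n).derivative.eval x := by
  rw [eq_eval_poly]
  exact Polynomial.deriv _

theorem natDegree_poly (n : ℕ) : (poly n).natDegree = 4 * n := by
  rw [poly, natDegree_prod_of_monic _ _ fun k _ => (monic_X_pow_sub_C _ two_ne_zero).pow 2]
  simp only [natDegree_pow, natDegree_X_pow_sub_C, sum_const, Nat.card_Icc, smul_eq_mul]
  omega

theorem degree_derivative_poly (hn : 1 ≤ n) :
    (poly n).derivative.degree = (4 * n - 1 : ℕ) := by
  rw [degree_derivative (by rw [natDegree_poly]; omega), natDegree_poly]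

theorem setOf_deriv_eq_zero_eq (hn : 1 ≤ n) {S : Finset ℝ} (hS : ∀ x ∈ S, deriv (Vn n) x = 0)
    (hcard : 4 * n - 1 ≤ #S) : {x | deriv (Vn n) x = 0} = S := by
  have hdeg := degree_derivative_poly hn
  simp only [deriv_eq_eval_derivative] at hS ⊢
  refine Polynomial.setOf_eval_eq_zero_eq_of_natDegree_le_card ?_ hS ?_
  · exact fun h => by simp [h] at hdeg
  · rwa [natDegree_eq_of_degree_eq_some hdeg]

theorem nonneg (n : ℕ) (x : ℝ) : 0 ≤ Vn n x :=
  prod_nonneg fun _ _ => sq_nonneg _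

theorem deriv_neg (n : ℕ) (x : ℝ) : deriv (Vn n) (-x) = -deriv (Vn n) x := by
  have heven : (fun y => Vn n (-y)) = Vn n := funext fun y => by simp [Vn]
  rw [← neg_neg (deriv (Vn n) (-x)), ← deriv_comp_neg, heven]

theorem deriv_zero (n : ℕ) : deriv (Vn n) 0 = 0 := by
  have := deriv_neg n 0
  rw [neg_zero] at this
  linarith

theorem eq_zero_of_mem_Icc {k : ℕ} (hk : k ∈ Icc 1 n) : Vn n ((k : ℝ) - 1 / 2) = 0 :=
  prod_eq_zero hk (by ring)

theorem deriv_eq_zero_of_mem_Icc {k : ℕ} (hk : k ∈ Icc 1 n) :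
    deriv (Vn n) ((k : ℝ) - 1 / 2) = 0 :=
  IsLocalMin.deriv_eq_zero <| Filter.Eventually.of_forall fun x => by
    rw [eq_zero_of_mem_Icc hk]
    exact nonneg n x

theorem exists_deriv_eq_zero_mem_Ioo {k : ℕ} (hk : k ∈ Icc 1 (n - 1)) :
    ∃ x ∈ Set.Ioo ((k : ℝ) - 1 / 2) (k + 1 / 2), deriv (Vn n) x = 0 := by
  rw [mem_Icc] at hk
  have hk1 : (k + 1 : ℕ) ∈ Icc 1 n := mem_Icc.2 ⟨by omega, by omega⟩
  have hends : Vn n ((k : ℝ) - 1 / 2) = Vn n (k + 1 / 2) := by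
    rw [eq_zero_of_mem_Icc (mem_Icc.2 ⟨hk.1, by omega⟩), ← eq_zero_of_mem_Icc hk1]
    push_cast
    ring_nf
  have hcont : Continuous (Vn n) := eq_eval_poly n ▸ (poly n).continuous
  exact exists_deriv_eq_zero (by linarith) hcont.continuousOn hends

/-- `c k` is to be a critical point in `(k − 1/2, k + 1/2)`, as provided by Rolle's theorem. -/
noncomputable def positiveCritPoints (n : ℕ) (c : ℕ → ℝ) : Finset ℝ :=
  (Icc 1 n).image (fun k : ℕ => (k : ℝ) - 1 / 2) ∪ (Icc 1 (n - 1)).image c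

noncomputable def critPoints (n : ℕ) (c : ℕ → ℝ) : Finset ℝ :=
  insert 0 (positiveCritPoints n c ∪ (positiveCritPoints n c).image Neg.neg)

section CritPoints

variable {c : ℕ → ℝ}

theorem pos_of_mem_positiveCritPoints
    (hc : ∀ k ∈ Icc 1 (n - 1), c k ∈ Set.Ioo ((k : ℝ) - 1 / 2) (k + 1 / 2)) {x : ℝ}
    (hx : x ∈ positiveCritPoints n c) : 0 < x := by
  simp only [positiveCritPoints, mem_union, mem_image] at hx
  rcases hx with ⟨k, hk, rfl⟩ | ⟨k, hk, rfl⟩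
  · have : (1 : ℝ) ≤ k := by exact_mod_cast (mem_Icc.1 hk).1
    linarith
  · have : (1 : ℝ) ≤ k := by exact_mod_cast (mem_Icc.1 hk).1
    linarith [(hc k hk).1]

theorem card_positiveCritPoints
    (hc : ∀ k ∈ Icc 1 (n - 1), c k ∈ Set.Ioo ((k : ℝ) - 1 / 2) (k + 1 / 2)) :
    #(positiveCritPoints n c) = 2 * n - 1 := by
  have hinj : Set.InjOn c (Icc 1 (n - 1)) := fun j hj k hk hjk =>
    Nat.eq_of_mem_Ioo_sub_half_add_half (hc j hj) (hjk ▸ hc k hk)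
  have hdisj :
      Disjoint ((Icc 1 n).image fun k : ℕ => (k : ℝ) - 1 / 2) ((Icc 1 (n - 1)).image c) := by
    rw [disjoint_left]
    rintro _ hj hk
    obtain ⟨j, -, rfl⟩ := mem_image.1 hj
    obtain ⟨k, hk, hkj⟩ := mem_image.1 hk
    exact Nat.cast_sub_half_notMem_Ioo j k (hkj ▸ hc k hk)
  rw [positiveCritPoints, card_union_of_disjoint hdisj,
    card_image_of_injective _ fun a b h => by simpa using h, card_image_of_injOn hinj,
    Nat.card_Icc, Nat.card_Icc]
  omega

theorem card_critPoints (hn : 1 ≤ n)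
    (hc : ∀ k ∈ Icc 1 (n - 1), c k ∈ Set.Ioo ((k : ℝ) - 1 / 2) (k + 1 / 2)) :
    #(critPoints n c) = 4 * n - 1 := by
  rw [critPoints, card_insert_zero_union_image_neg fun x => pos_of_mem_positiveCritPoints hc,
    card_positiveCritPoints hc]
  omega

theorem eq_of_mem_positiveCritPoints_of_mem_Ioo
    (hc : ∀ k ∈ Icc 1 (n - 1), c k ∈ Set.Ioo ((k : ℝ) - 1 / 2) (k + 1 / 2)) {x : ℝ}
    (hx : x ∈ positiveCritPoints n c) {k : ℕ} (hxk : x ∈ Set.Ioo ((k : ℝ) - 1 / 2) (k + 1 / 2)) :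
    x = c k := by
  simp only [positiveCritPoints, mem_union, mem_image] at hx
  rcases hx with ⟨j, -, rfl⟩ | ⟨j, hj, rfl⟩
  · exact absurd hxk (Nat.cast_sub_half_notMem_Ioo j k)
  · rw [Nat.eq_of_mem_Ioo_sub_half_add_half (hc j hj) hxk]

theorem deriv_eq_zero_of_mem_critPoints (hc : ∀ k ∈ Icc 1 (n - 1), deriv (Vn n) (c k) = 0)
    {x : ℝ} (hx : x ∈ critPoints n c) : deriv (Vn n) x = 0 := by
  have hpos {y : ℝ} (hy : y ∈ positiveCritPoints n c) : deriv (Vn n) y = 0 := by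
    simp only [positiveCritPoints, mem_union, mem_image] at hy
    rcases hy with ⟨k, hk, rfl⟩ | ⟨k, hk, rfl⟩
    · exact deriv_eq_zero_of_mem_Icc hk
    · exact hc k hk
  simp only [critPoints, mem_insert, mem_union, mem_image] at hx
  rcases hx with rfl | hx | ⟨y, hy, rfl⟩
  · exact deriv_zero n
  · exact hpos hx
  · rw [deriv_neg, hpos hy, neg_zero]

theorem setOf_deriv_eq_zero_eq_critPoints (hn : 1 ≤ n)
    (hcI : ∀ k ∈ Icc 1 (n - 1), c k ∈ Set.Ioo ((k : ℝ) - 1 / 2) (k + 1 / 2))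
    (hcV : ∀ k ∈ Icc 1 (n - 1), deriv (Vn n) (c k) = 0) :
    {x | deriv (Vn n) x = 0} = critPoints n c :=
  setOf_deriv_eq_zero_eq hn (fun _ => deriv_eq_zero_of_mem_critPoints hcV)
    (card_critPoints hn hcI).ge

theorem existsUnique_deriv_eq_zero_mem_Ioo (hn : 1 ≤ n)
    (hcI : ∀ k ∈ Icc 1 (n - 1), c k ∈ Set.Ioo ((k : ℝ) - 1 / 2) (k + 1 / 2))
    (hcV : ∀ k ∈ Icc 1 (n - 1), deriv (Vn n) (c k) = 0) {k : ℕ} (hk : k ∈ Icc 1 (n - 1)) :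
    ∃! x, x ∈ Set.Ioo ((k : ℝ) - 1 / 2) (k + 1 / 2) ∧ deriv (Vn n) x = 0 := by
  refine ⟨c k, ⟨hcI k hk, hcV k hk⟩, fun y ⟨hy, hdy⟩ => ?_⟩
  have hyc : y ∈ critPoints n c := by
    rw [← mem_coe, ← setOf_deriv_eq_zero_eq_critPoints hn hcI hcV]
    exact hdy
  have hy0 : 0 < y := by
    have : (1 : ℝ) ≤ k := by exact_mod_cast (mem_Icc.1 hk).1
    linarith [hy.1]
  simp only [critPoints, mem_insert, mem_union, mem_image] at hyc
  rcases hyc with rfl | hyP | ⟨z, hz, rfl⟩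
  · exact absurd hy0 (lt_irrefl 0)
  · exact eq_of_mem_positiveCritPoints_of_mem_Ioo hcI hyP hy
  · linarith [pos_of_mem_positiveCritPoints hcI hz]

end CritPoints

end Vn

theorem stmt17 (n : ℕ) (hn : 1 ≤ n) :
    {x : ℝ | deriv (Vn n) x = 0}.Finite ∧
    {x : ℝ | deriv (Vn n) x = 0}.ncard = 4 * n - 1 ∧
    deriv (Vn n) 0 = 0 ∧
    (∀ k ∈ Finset.Icc 1 n,
      deriv (Vn n) ((k : ℝ) - 1 / 2) = 0 ∧ deriv (Vn n) (-((k : ℝ) - 1 / 2)) = 0) ∧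
    (∀ k : ℕ, 1 ≤ k → k ≤ n - 1 →
      (∃! x : ℝ, x ∈ Set.Ioo ((k : ℝ) - 1 / 2) ((k : ℝ) + 1 / 2) ∧ deriv (Vn n) x = 0) ∧
      (∃! x : ℝ, x ∈ Set.Ioo (-(k : ℝ) - 1 / 2) (-(k : ℝ) + 1 / 2) ∧ deriv (Vn n) x = 0)) := by
  choose! c hc using fun k (hk : k ∈ Icc 1 (n - 1)) =>
    Vn.exists_deriv_eq_zero_mem_Ioo (n := n) hk
  have hcI := fun k hk => (hc k hk).1
  have hcV := fun k hk => (hc k hk).2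
  have hcrit := Vn.setOf_deriv_eq_zero_eq_critPoints hn hcI hcV
  have hroot (k : ℕ) (hk : k ∈ Icc 1 n) := Vn.deriv_eq_zero_of_mem_Icc hk
  refine ⟨hcrit ▸ finite_toSet _, by rw [hcrit, Set.ncard_coe_finset, Vn.card_critPoints hn hcI],
    Vn.deriv_zero n, fun k hk => ⟨hroot k hk, by rw [Vn.deriv_neg, hroot k hk, neg_zero]⟩,
    fun k hk1 hk2 => ?_⟩
  have hpos := Vn.existsUnique_deriv_eq_zero_mem_Ioo hn hcI hcV (mem_Icc.2 ⟨hk1, hk2⟩)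
  refine ⟨hpos, ?_⟩
  convert existsUnique_mem_Ioo_neg_of_odd (Vn.deriv_neg n) hpos using 5 <;> ring
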